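/- arXiv:math/0506527 — 3 statements merged into one kernel-verified Lean document; each statement's English description precedes it below -/
import Mathlib

section
/- For r ∈ ⋀²g, the degree-1 derivation d_r = ⟦r,·⟧ of ⋀g satisfies d_r² = 0 if and only if ⟦r,r⟧ ∈ (⋀³g)^g, i.e. if and only if ⟦r,r⟧ is invariant under the adjoint action of g. -/
/-!
STATEMENT 2: The Schouten bracket endows ⋀g with the structure of a ℤ-graded Lie
algebra when ⋀^k g has degree k−1: graded antisymmetry and graded Jacobi hold for
X ∈ ⋀^k g, Y ∈ ⋀^l g, Z ∈ ⋀g.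

The Schouten bracket is encoded as a bilinear map `br` on the exterior algebra
satisfying the defining formula on decomposables:
⟦X₁∧…∧X_k, Y₁∧…∧Y_l⟧ = Σ_{i,j} (−1)^{i+j} [Xᵢ,Yⱼ] ∧ (X omit i) ∧ (Y omit j).
-/

open ExteriorAlgebra

noncomputable section

variable {K : Type*} [Field K] [CharZero K]
variable {g : Type*} [LieRing g] [LieAlgebra K g]

/-- X₁ ∧ … ∧ X_k in the exterior algebra. -/
def wdg {k : ℕ} (X : Fin k → g) : ExteriorAlgebra K g :=
  ((List.ofFn X).map (ExteriorAlgebra.ι K)).prod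

/-- X₁ ∧ … ∧ X̂ᵢ ∧ … ∧ X_k. -/
def wdgErase {k : ℕ} (X : Fin k → g) (i : Fin k) : ExteriorAlgebra K g :=
  (((List.ofFn X).eraseIdx i).map (ExteriorAlgebra.ι K)).prod

/-- `br` is the Schouten bracket: it is bilinear and satisfies the defining formula
on decomposables (indices in the sign are 0-based, matching the 1-based (−1)^{i+j}). -/
def IsSchoutenBracket
    (br : ExteriorAlgebra K g →ₗ[K] ExteriorAlgebra K g →ₗ[K] ExteriorAlgebra K g) : Prop :=
  ∀ (k l : ℕ) (X : Fin k → g) (Y : Fin l → g),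
    br (wdg X) (wdg Y) =
      ∑ i : Fin k, ∑ j : Fin l, ((-1 : K) ^ (i.val + j.val)) •
        (ExteriorAlgebra.ι K ⁅X i, Y j⁆ * wdgErase X i * wdgErase Y j)


set_option linter.unusedSectionVars false

-- abbreviation for list products
local notation "ιK" => ExteriorAlgebra.ι K

def lprod (L : List g) : ExteriorAlgebra K g := (L.map (ExteriorAlgebra.ι K)).prod

lemma lprod_nil : lprod (K := K) ([] : List g) = 1 := rfl

lemma lprod_cons (a : g) (L : List g) :
    lprod (K := K) (a :: L) = ιK a * lprod L := by simp [lprod]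

lemma lprod_append (L M : List g) :
    lprod (K := K) (L ++ M) = lprod L * lprod M := by simp [lprod]

lemma wdg_eq_lprod {k : ℕ} (X : Fin k → g) : wdg (K := K) X = lprod (List.ofFn X) := rfl

lemma wdgErase_eq_lprod {k : ℕ} (X : Fin k → g) (i : Fin k) :
    wdgErase (K := K) X i = lprod ((List.ofFn X).eraseIdx i) := rfl

lemma wdg_zero (X : Fin 0 → g) : wdg (K := K) X = 1 := by simp [wdg]

lemma wdg_one (z : g) (X : Fin 1 → g) : wdg (K := K) X = ιK (X 0) := by
  simp [wdg, List.ofFn_succ]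

lemma ι_mul_lprod_comm (z : g) (L : List g) :
    ιK z * lprod L = ((-1 : K) ^ L.length) • (lprod (K := K) L * ιK z) := by
  induction L with
  | nil => simp [lprod_nil]
  | cons a L ih =>
      have swap : ιK z * ιK a = -(ιK a * ιK z) := by
        have := ExteriorAlgebra.ι_add_mul_swap (R := K) z a
        linear_combination (norm := noncomm_ring) this
      rw [lprod_cons, ← mul_assoc, swap, neg_mul, mul_assoc, ih]
      simp only [List.length_cons, pow_succ, mul_smul_comm, smul_smul, mul_assoc]
      module

lemma lprod_mul_comm (L M : List g) :
    lprod (K := K) L * lprod M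
      = ((-1 : K) ^ (L.length * M.length)) • (lprod (K := K) M * lprod L) := by
  induction L with
  | nil => simp [lprod_nil]
  | cons a L ih =>
      rw [lprod_cons, mul_assoc, ih, mul_smul_comm, ← mul_assoc, ι_mul_lprod_comm,
        smul_mul_assoc, smul_smul, ← pow_add, List.length_cons, mul_assoc]
      congr 1
      ring

lemma wdg_snoc {m : ℕ} (X : Fin m → g) (z : g) :
    wdg (K := K) (Fin.snoc X z) = wdg X * ιK z := by
  rw [wdg_eq_lprod, List.ofFn_succ']
  simp only [Fin.snoc_castSucc, Fin.snoc_last, List.concat_eq_append]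
  rw [lprod_append]
  simp [lprod, wdg_eq_lprod]

lemma wdgErase_snoc_castSucc {m : ℕ} (X : Fin m → g) (z : g) (j : Fin m) :
    wdgErase (K := K) (Fin.snoc X z) j.castSucc = wdgErase X j * ιK z := by
  rw [wdgErase_eq_lprod, List.ofFn_succ']
  simp only [Fin.snoc_castSucc, Fin.snoc_last, List.concat_eq_append, Fin.coe_castSucc]
  rw [List.eraseIdx_append_of_lt_length (by simpa using j.isLt), lprod_append]
  simp [lprod, wdgErase_eq_lprod]

lemma wdgErase_snoc_last {m : ℕ} (X : Fin m → g) (z : g) :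
    wdgErase (K := K) (Fin.snoc X z) (Fin.last m) = wdg X := by
  rw [wdgErase_eq_lprod, List.ofFn_succ']
  simp only [Fin.snoc_castSucc, Fin.snoc_last, List.concat_eq_append, Fin.val_last]
  rw [List.eraseIdx_append_of_length_le (by simp)]
  simp [lprod, wdg_eq_lprod, wdgErase_eq_lprod]

variable (bb : ExteriorAlgebra K g →ₗ[K] ExteriorAlgebra K g →ₗ[K] ExteriorAlgebra K g)

lemma br_wdg_ι (hbr : IsSchoutenBracket bb) {k : ℕ} (S : Fin k → g) (z : g) :
    bb (wdg S) (ιK z) = ∑ i : Fin k, ((-1 : K) ^ (i : ℕ)) • (ιK ⁅S i, z⁆ * wdgErase S i) := by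
  have h := hbr k 1 S (fun _ => z)
  rw [wdg_one z (fun _ => z)] at h
  rw [h]
  apply Finset.sum_congr rfl
  intro i _
  rw [Fin.sum_univ_one]
  have : wdgErase (K := K) (fun _ : Fin 1 => z) 0 = 1 := by
    simp [wdgErase_eq_lprod, List.ofFn_succ, lprod]
  rw [this, mul_one]
  norm_num

lemma lie_block_comm {k m : ℕ} (S : Fin k → g) (i : Fin k) (w : g) (X : Fin m → g) :
    (ιK ⁅S i, w⁆ * wdgErase S i) * wdg X
      = ((-1 : K) ^ (k * m)) • (wdg (K := K) X * (ιK ⁅S i, w⁆ * wdgErase S i)) := by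
  have h1 : ιK ⁅S i, w⁆ * wdgErase (K := K) S i
      = lprod (⁅S i, w⁆ :: (List.ofFn S).eraseIdx i) := by
    rw [lprod_cons, wdgErase_eq_lprod]
  rw [h1, wdg_eq_lprod, lprod_mul_comm]
  have hlen : (⁅S i, w⁆ :: (List.ofFn S).eraseIdx i).length = k := by
    rw [List.length_cons, List.length_eraseIdx_of_lt (by simpa using i.isLt), List.length_ofFn]
    have := i.pos
    omega
  rw [hlen, List.length_ofFn]

lemma leib_dec (hbr : IsSchoutenBracket bb) {k m : ℕ} (S : Fin k → g) (X : Fin m → g)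
    (z : g) :
    bb (wdg S) (wdg X * ιK z)
      = bb (wdg S) (wdg X) * ιK z
        + ((-1 : K) ^ ((k+1) * m)) • (wdg X * bb (wdg S) (ιK z)) := by
  rw [← wdg_snoc, hbr k (m+1) S (Fin.snoc X z), hbr k m S X, br_wdg_ι bb hbr S z]
  have key : ∀ i : Fin k,
      (∑ j : Fin (m+1), ((-1 : K) ^ ((i : ℕ) + (j : ℕ))) •
          (ιK ⁅S i, (Fin.snoc X z : Fin (m+1) → g) j⁆ * wdgErase S i * wdgErase (Fin.snoc X z : Fin (m+1) → g) j))
        = (∑ j : Fin m, ((-1 : K) ^ ((i : ℕ) + (j : ℕ))) •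
            (ιK ⁅S i, X j⁆ * wdgErase S i * wdgErase X j)) * ιK z
          + ((-1 : K) ^ ((k+1) * m)) •
              (wdg X * (((-1 : K) ^ (i : ℕ)) • (ιK ⁅S i, z⁆ * wdgErase S i))) := by
    intro i
    rw [Fin.sum_univ_castSucc]
    congr 1
    · rw [Finset.sum_mul]
      apply Finset.sum_congr rfl
      intro j _
      rw [Fin.snoc_castSucc, wdgErase_snoc_castSucc, Fin.coe_castSucc]
      simp only [smul_mul_assoc, mul_assoc]
    · rw [Fin.snoc_last, wdgErase_snoc_last, Fin.val_last, lie_block_comm,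
        smul_smul, mul_smul_comm, smul_smul]
      congr 1
      ring
  rw [Finset.sum_congr rfl (fun i _ => key i), Finset.sum_add_distrib, ← Finset.sum_mul,
    ← Finset.smul_sum, ← Finset.mul_sum]

/-- generators of degree 2 -/
def S2set : Set (ExteriorAlgebra K g) := {w | ∃ u v : g, w = ιK u * ιK v}

/-- span of decomposables of a fixed length -/
def SpanDec (m : ℕ) : Submodule K (ExteriorAlgebra K g) :=
  Submodule.span K (Set.range (wdg (k := m) (K := K) (g := g)))

lemma wdg_two (W : Fin 2 → g) : wdg (K := K) W = ιK (W 0) * ιK (W 1) := by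
  simp [wdg, List.ofFn_succ]

lemma wdg_pair (u v : g) : wdg (K := K) ![u, v] = ιK u * ιK v := by
  rw [wdg_two]; simp

lemma lprod_mem (L : List g) : lprod (K := K) L ∈ SpanDec (K := K) L.length := by
  apply Submodule.subset_span
  exact ⟨fun i => L.get i, by rw [wdg_eq_lprod, List.ofFn_get]⟩

lemma lprod_mem' (L : List g) {m : ℕ} (h : L.length = m) :
    lprod (K := K) L ∈ SpanDec (K := K) (g := g) m := h ▸ lprod_mem L

lemma ι_mem_SpanDec (z : g) : ιK z ∈ SpanDec (K := K) (g := g) 1 := by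
  have : ιK z = lprod [z] := by simp [lprod]
  rw [this]; exact lprod_mem' _ rfl

lemma mul_ι_mem {m : ℕ} {x : ExteriorAlgebra K g} (hx : x ∈ SpanDec (K := K) m) (z : g) :
    x * ιK z ∈ SpanDec (K := K) (g := g) (m + 1) := by
  induction hx using Submodule.span_induction with
  | mem w hw =>
      obtain ⟨X, rfl⟩ := hw
      rw [← wdg_snoc]
      exact Submodule.subset_span ⟨Fin.snoc X z, rfl⟩
  | zero => simp
  | add x y hx hy ihx ihy => rw [add_mul]; exact add_mem ihx ihy
  | smul a x hx ih => rw [smul_mul_assoc]; exact Submodule.smul_mem _ _ ih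

lemma hr_span {r : ExteriorAlgebra K g} (hr : r ∈ ⋀[K]^2 g) :
    r ∈ Submodule.span K (S2set (K := K) (g := g)) := by
  have hr' : r ∈ LinearMap.range (ι K : g →ₗ[K] ExteriorAlgebra K g) *
      LinearMap.range (ι K : g →ₗ[K] ExteriorAlgebra K g) := by
    rwa [← pow_two]
  refine Submodule.mul_induction_on hr' ?_ ?_
  · rintro x ⟨u, rfl⟩ y ⟨v, rfl⟩
    exact Submodule.subset_span ⟨u, v, rfl⟩
  · intro x y hx hy
    exact add_mem hx hy

lemma br_one (hbr : IsSchoutenBracket bb) {a : ExteriorAlgebra K g}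
    (ha : a ∈ Submodule.span K (S2set (K := K) (g := g))) : bb a 1 = 0 := by
  induction ha using Submodule.span_induction with
  | mem w hw =>
      obtain ⟨u, v, rfl⟩ := hw
      rw [← wdg_pair, ← wdg_zero (Fin.elim0), hbr 2 0 ![u, v] Fin.elim0]
      simp
  | zero => simp
  | add x y hx hy ihx ihy => rw [map_add, LinearMap.add_apply, ihx, ihy, add_zero]
  | smul c x hx ih => rw [map_smul, LinearMap.smul_apply, ih, smul_zero]

lemma leib_span (hbr : IsSchoutenBracket bb) {a : ExteriorAlgebra K g}
    (ha : a ∈ Submodule.span K (S2set (K := K) (g := g))) {m : ℕ}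
    {x : ExteriorAlgebra K g} (hx : x ∈ SpanDec (K := K) m) (z : g) :
    bb a (x * ιK z) = bb a x * ιK z + ((-1 : K) ^ m) • (x * bb a (ιK z)) := by
  induction ha using Submodule.span_induction with
  | mem w hw =>
      obtain ⟨u, v, rfl⟩ := hw
      induction hx using Submodule.span_induction with
      | mem w' hw' =>
          obtain ⟨X, rfl⟩ := hw'
          rw [← wdg_pair, leib_dec bb hbr ![u, v] X z]
          congr 2
          rw [pow_mul]
          norm_num
      | zero => simp
      | add x y hx hy ihx ihy =>
          simp only [add_mul, map_add, smul_add]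
          rw [ihx, ihy]
          module
      | smul c x hx ih =>
          simp only [smul_mul_assoc, map_smul]
          rw [ih]
          module
  | zero => simp
  | add a b ha hb iha ihb =>
      simp only [map_add, LinearMap.add_apply]
      rw [iha, ihb]
      simp only [add_mul, mul_add, smul_add]
      module
  | smul c a ha ih =>
      simp only [map_smul, LinearMap.smul_apply]
      rw [ih]
      simp only [smul_add, smul_mul_assoc, mul_smul_comm, smul_smul]
      module

lemma br_mem_SpanDec (hbr : IsSchoutenBracket bb) {a : ExteriorAlgebra K g}
    (ha : a ∈ Submodule.span K (S2set (K := K) (g := g))) {m : ℕ}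
    {x : ExteriorAlgebra K g} (hx : x ∈ SpanDec (K := K) m) :
    bb a x ∈ SpanDec (K := K) (g := g) (m + 1) := by
  induction ha using Submodule.span_induction with
  | mem w hw =>
      obtain ⟨u, v, rfl⟩ := hw
      induction hx using Submodule.span_induction with
      | mem w' hw' =>
          obtain ⟨X, rfl⟩ := hw'
          rw [← wdg_pair, hbr 2 m ![u, v] X]
          refine Submodule.sum_mem _ fun i _ => Submodule.sum_mem _ fun j _ =>
            Submodule.smul_mem _ _ ?_
          have hterm : ιK ⁅![u, v] i, X j⁆ * wdgErase ![u, v] i * wdgErase X j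
              = lprod (⁅![u, v] i, X j⁆ ::
                  ((List.ofFn ![u, v]).eraseIdx i ++ (List.ofFn X).eraseIdx j)) := by
            rw [lprod_cons, lprod_append, wdgErase_eq_lprod, wdgErase_eq_lprod, mul_assoc]
          rw [hterm]
          refine lprod_mem' _ ?_
          rw [List.length_cons, List.length_append,
            List.length_eraseIdx_of_lt (by simpa using i.isLt),
            List.length_eraseIdx_of_lt (by simpa using j.isLt),
            List.length_ofFn, List.length_ofFn]
          have := j.pos
          omega
      | zero => simp
      | add x y hx hy ihx ihy => rw [map_add]; exact add_mem ihx ihy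
      | smul c x hx ih => rw [map_smul]; exact Submodule.smul_mem _ _ ih
  | zero => simp
  | add a b ha hb iha ihb =>
      rw [map_add, LinearMap.add_apply]; exact add_mem iha ihb
  | smul c a ha ih =>
      rw [map_smul, LinearMap.smul_apply]; exact Submodule.smul_mem _ _ ih

lemma leib_span2 (hbr : IsSchoutenBracket bb) {a : ExteriorAlgebra K g}
    (ha : a ∈ Submodule.span K (S2set (K := K) (g := g))) {m : ℕ}
    {x : ExteriorAlgebra K g} (hx : x ∈ SpanDec (K := K) m)
    {w : ExteriorAlgebra K g} (hw : w ∈ SpanDec (K := K) 2) :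
    bb a (x * w) = bb a x * w + ((-1 : K) ^ m) • (x * bb a w) := by
  induction hw using Submodule.span_induction with
  | mem w' hw' =>
      obtain ⟨W, rfl⟩ := hw'
      rw [wdg_two, ← mul_assoc, leib_span bb hbr ha (mul_ι_mem hx (W 0)) (W 1),
        leib_span bb hbr ha hx (W 0), leib_span bb hbr ha (ι_mem_SpanDec (W 0)) (W 1)]
      simp only [add_mul, mul_add, smul_mul_assoc, mul_smul_comm, smul_add, smul_smul,
        mul_assoc, pow_succ, pow_one]
      module
  | zero => simp
  | add w1 w2 h1 h2 ih1 ih2 =>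
      simp only [mul_add, map_add]
      rw [ih1, ih2]
      simp only [mul_add, smul_add]
      module
  | smul c w1 h1 ih =>
      simp only [mul_smul_comm, map_smul]
      rw [ih]
      simp only [smul_add, smul_smul, mul_smul_comm, smul_mul_assoc]
      module

lemma wdgErase_singleton (y : g) : wdgErase (K := K) (fun _ : Fin 1 => y) 0 = 1 := by
  simp [wdgErase_eq_lprod, List.ofFn_succ, lprod]

def DecSet : Set (ExteriorAlgebra K g) := {w | ∃ L : List g, w = lprod L}

lemma mem_span_dec (x : ExteriorAlgebra K g) :
    x ∈ Submodule.span K (DecSet (K := K) (g := g)) := by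
  induction x using ExteriorAlgebra.induction with
  | algebraMap r =>
      rw [Algebra.algebraMap_eq_smul_one]
      exact Submodule.smul_mem _ _ (Submodule.subset_span ⟨[], rfl⟩)
  | ι y => exact Submodule.subset_span ⟨[y], by simp [lprod]⟩
  | mul x y hx hy =>
      have h := Submodule.mul_mem_mul hx hy
      rw [Submodule.span_mul_span] at h
      refine Submodule.span_le.mpr ?_ h
      rintro w hw
      rw [Set.mem_mul] at hw
      obtain ⟨s, hs, t, ht, rfl⟩ := hw
      obtain ⟨L1, rfl⟩ := hs
      obtain ⟨L2, rfl⟩ := ht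
      exact Submodule.subset_span ⟨L1 ++ L2, (lprod_append L1 L2).symm⟩
  | add x y hx hy => exact add_mem hx hy

lemma lprod_eq_wdg (L : List g) :
    lprod (K := K) L = wdg (fun i : Fin L.length => L.get i) := by
  rw [wdg_eq_lprod, List.ofFn_get]

lemma br_ι_antisym (hbr : IsSchoutenBracket bb) (y : g) (x : ExteriorAlgebra K g) :
    bb (ιK y) x = - bb x (ιK y) := by
  have main : ∀ w ∈ DecSet (K := K) (g := g), bb (ιK y) w = - bb w (ιK y) := by
    rintro w ⟨L, rfl⟩
    rw [lprod_eq_wdg]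
    set X := fun i : Fin L.length => L.get i
    rw [← wdg_one y (fun _ => y), hbr 1 L.length (fun _ => y) X, wdg_one y (fun _ => y),
      br_wdg_ι bb hbr X y, Fin.sum_univ_one, ← Finset.sum_neg_distrib]
    apply Finset.sum_congr rfl
    intro j _
    rw [wdgErase_singleton, mul_one, ← neg_smul]
    have hsk : ⁅y, X j⁆ = -⁅X j, y⁆ := by rw [← lie_skew y (X j)]
    rw [hsk, map_neg, neg_mul, smul_neg, ← neg_smul]
    congr 1
    norm_num
  have hx := mem_span_dec (K := K) x
  induction hx using Submodule.span_induction with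
  | mem w hw => exact main w hw
  | zero => simp
  | add x1 x2 h1 h2 ih1 ih2 =>
      simp only [map_add, LinearMap.add_apply]
      rw [ih1, ih2]
      abel
  | smul c x1 h1 ih =>
      simp only [map_smul, LinearMap.smul_apply]
      rw [ih, smul_neg]

lemma wdg_three (s0 s1 s2 : g) :
    wdg (K := K) ![s0, s1, s2] = ιK s0 * ιK s1 * ιK s2 := by
  simp [wdg, List.ofFn_succ, mul_assoc]

lemma br_2dec_ι (hbr : IsSchoutenBracket bb) (a0 a1 y : g) :
    bb (ιK a0 * ιK a1) (ιK y) = ιK ⁅a0, y⁆ * ιK a1 - ιK ⁅a1, y⁆ * ιK a0 := by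
  rw [← wdg_pair, br_wdg_ι bb hbr ![a0, a1] y, Fin.sum_univ_two]
  have e0 : wdgErase (K := K) ![a0, a1] 0 = ιK a1 := by
    simp [wdgErase, List.ofFn_succ, List.eraseIdx]
  have e1 : wdgErase (K := K) ![a0, a1] 1 = ιK a0 := by
    simp [wdgErase, List.ofFn_succ, List.eraseIdx]
  rw [e0, e1]
  norm_num
  abel

lemma br_22 (hbr : IsSchoutenBracket bb) (a0 a1 u v : g) :
    bb (ιK a0 * ιK a1) (ιK u * ιK v)
      = ιK ⁅a0, u⁆ * ιK a1 * ιK v - ιK ⁅a0, v⁆ * ιK a1 * ιK u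
        - ιK ⁅a1, u⁆ * ιK a0 * ιK v + ιK ⁅a1, v⁆ * ιK a0 * ιK u := by
  rw [← wdg_pair, ← wdg_pair u v, hbr 2 2 ![a0, a1] ![u, v]]
  have e0 : wdgErase (K := K) ![a0, a1] 0 = ιK a1 := by
    simp [wdgErase, List.ofFn_succ, List.eraseIdx]
  have e1 : wdgErase (K := K) ![a0, a1] 1 = ιK a0 := by
    simp [wdgErase, List.ofFn_succ, List.eraseIdx]
  have f0 : wdgErase (K := K) ![u, v] 0 = ιK v := by
    simp [wdgErase, List.ofFn_succ, List.eraseIdx]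
  have f1 : wdgErase (K := K) ![u, v] 1 = ιK u := by
    simp [wdgErase, List.ofFn_succ, List.eraseIdx]
  rw [Fin.sum_univ_two, Fin.sum_univ_two, Fin.sum_univ_two, e0, e1, f0, f1]
  norm_num
  abel

lemma br_3dec_ι (hbr : IsSchoutenBracket bb) (s0 s1 s2 y : g) :
    bb (ιK s0 * ιK s1 * ιK s2) (ιK y)
      = ιK ⁅s0, y⁆ * (ιK s1 * ιK s2) - ιK ⁅s1, y⁆ * (ιK s0 * ιK s2)
        + ιK ⁅s2, y⁆ * (ιK s0 * ιK s1) := by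
  rw [← wdg_three, br_wdg_ι bb hbr ![s0, s1, s2] y, Fin.sum_univ_three]
  have e0 : wdgErase (K := K) ![s0, s1, s2] 0 = ιK s1 * ιK s2 := by
    simp [wdgErase, List.ofFn_succ, List.eraseIdx]
  have e1 : wdgErase (K := K) ![s0, s1, s2] 1 = ιK s0 * ιK s2 := by
    simp [wdgErase, List.ofFn_succ, List.eraseIdx]
  have e2 : wdgErase (K := K) ![s0, s1, s2] 2 = ιK s0 * ιK s1 := by
    simp [wdgErase, List.ofFn_succ, List.eraseIdx]
  rw [e0, e1, e2]
  norm_num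
  abel

lemma ι_swap (x y : g) : ιK x * ιK y = -(ιK y * ιK x) := by
  have := ExteriorAlgebra.ι_add_mul_swap (R := K) x y
  linear_combination (norm := noncomm_ring) this

lemma mSwap (p q r : g) : ιK p * (ιK q * ιK r) = -(ιK p * (ιK r * ιK q)) := by
  rw [ι_swap q r]
  simp [mul_neg]

lemma mRot (p q r : g) : ιK p * (ιK q * ιK r) = ιK r * (ιK p * ιK q) := by
  rw [ι_swap q r, mul_neg, ← mul_assoc, ι_swap p r, neg_mul, mul_assoc, neg_neg]

lemma jacobi_base (hbr : IsSchoutenBracket bb) (a0 a1 b0 b1 y : g) :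
    bb (ιK a0 * ιK a1) (bb (ιK b0 * ιK b1) (ιK y))
      + bb (ιK b0 * ιK b1) (bb (ιK a0 * ιK a1) (ιK y))
      = bb (bb (ιK a0 * ιK a1) (ιK b0 * ιK b1)) (ιK y) := by
  rw [br_2dec_ι bb hbr b0 b1 y, br_2dec_ι bb hbr a0 a1 y, br_22 bb hbr a0 a1 b0 b1]
  simp only [map_sub, map_add, LinearMap.sub_apply, LinearMap.add_apply]
  rw [br_22 bb hbr a0 a1 ⁅b0, y⁆ b1, br_22 bb hbr a0 a1 ⁅b1, y⁆ b0,
    br_22 bb hbr b0 b1 ⁅a0, y⁆ a1, br_22 bb hbr b0 b1 ⁅a1, y⁆ a0,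
    br_3dec_ι bb hbr ⁅a0, b0⁆ a1 b1 y, br_3dec_ι bb hbr ⁅a0, b1⁆ a1 b0 y,
    br_3dec_ι bb hbr ⁅a1, b0⁆ a0 b1 y, br_3dec_ι bb hbr ⁅a1, b1⁆ a0 b0 y]
  simp only [lie_lie, map_sub, sub_mul, mul_assoc]
  have sk : ∀ p q : g, ⁅p, q⁆ = -⁅q, p⁆ := fun p q => by rw [← lie_skew]
  rw [sk b0 a1, sk b1 a1, sk b0 a0, sk b1 a0]
  simp only [map_neg, neg_mul]
  rw [mSwap ⁅b0, ⁅a0, y⁆⁆ b1 a1, mSwap ⁅b1, ⁅a0, y⁆⁆ b0 a1,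
    mSwap ⁅b0, ⁅a1, y⁆⁆ b1 a0, mSwap ⁅b1, ⁅a1, y⁆⁆ b0 a0,
    mRot ⁅a0, b1⁆ a1 ⁅b0, y⁆, mRot ⁅a1, b1⁆ a0 ⁅b0, y⁆,
    mRot ⁅a0, b0⁆ a1 ⁅b1, y⁆, mRot ⁅a1, b0⁆ a0 ⁅b1, y⁆,
    mRot ⁅a1, b0⁆ b1 ⁅a0, y⁆, mRot ⁅a1, b1⁆ b0 ⁅a0, y⁆,
    mRot ⁅a0, b0⁆ b1 ⁅a1, y⁆, mRot ⁅a0, b1⁆ b0 ⁅a1, y⁆]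
  abel

lemma jacobi_span (hbr : IsSchoutenBracket bb) {a b : ExteriorAlgebra K g}
    (ha : a ∈ Submodule.span K (S2set (K := K) (g := g)))
    (hb : b ∈ Submodule.span K (S2set (K := K) (g := g))) (y : g) :
    bb a (bb b (ιK y)) + bb b (bb a (ιK y)) = bb (bb a b) (ιK y) := by
  induction ha using Submodule.span_induction with
  | mem w hw =>
      obtain ⟨u, v, rfl⟩ := hw
      induction hb using Submodule.span_induction with
      | mem w' hw' =>
          obtain ⟨p, q, rfl⟩ := hw'
          exact jacobi_base bb hbr u v p q y
      | zero => simp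
      | add x1 x2 h1 h2 ih1 ih2 =>
          simp only [map_add, LinearMap.add_apply]
          rw [← ih1, ← ih2]
          abel
      | smul c x1 h1 ih =>
          simp only [map_smul, LinearMap.smul_apply, smul_add]
          rw [← ih]
          simp [smul_add]
  | zero => simp
  | add x1 x2 h1 h2 ih1 ih2 =>
      simp only [map_add, LinearMap.add_apply]
      rw [← ih1, ← ih2]
      abel
  | smul c x1 h1 ih =>
      simp only [map_smul, LinearMap.smul_apply, smul_add]
      rw [← ih]
      simp [smul_add]

theorem stmt4aux
    (hbr : IsSchoutenBracket bb)
    (r : ExteriorAlgebra K g) (hr : r ∈ ⋀[K]^2 g) :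
    (∀ x : ExteriorAlgebra K g, bb r (bb r x) = 0) ↔
      (∀ y : g, bb (ExteriorAlgebra.ι K y) (bb r r) = 0) := by
  have hra := hr_span (K := K) (g := g) hr
  have hJ : ∀ y : g, bb (bb r r) (ιK y) = bb r (bb r (ιK y)) + bb r (bb r (ιK y)) :=
    fun y => (jacobi_span bb hbr hra hra y).symm
  constructor
  · intro h y
    rw [br_ι_antisym bb hbr y (bb r r), hJ y, h (ιK y), add_zero, neg_zero]
  · intro h
    have hι : ∀ y : g, bb r (bb r (ιK y)) = 0 := by
      intro y
      have h0 := h y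
      rw [br_ι_antisym bb hbr y (bb r r), hJ y, neg_eq_zero] at h0
      have h2 : (2 : K) • bb r (bb r (ιK y)) = 0 := by
        rw [two_smul]; exact h0
      have := smul_eq_zero.mp h2
      simpa using this
    have key : ∀ m : ℕ, ∀ x ∈ SpanDec (K := K) (g := g) m, bb r (bb r x) = 0 := by
      intro m
      induction m with
      | zero =>
          intro x hx
          induction hx using Submodule.span_induction with
          | mem w hw =>
              obtain ⟨X, rfl⟩ := hw
              rw [wdg_zero, br_one bb hbr hra, map_zero]
          | zero => simp
          | add x1 x2 h1 h2 ih1 ih2 => simp only [map_add]; rw [ih1, ih2, add_zero]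
          | smul c x1 h1 ih => simp only [map_smul]; rw [ih, smul_zero]
      | succ m ihm =>
          intro x hx
          induction hx using Submodule.span_induction with
          | mem w hw =>
              obtain ⟨X, rfl⟩ := hw
              have hXd : wdg (K := K) X = wdg (Fin.init X) * ιK (X (Fin.last m)) := by
                rw [← wdg_snoc, Fin.snoc_init_self]
              set x' := wdg (K := K) (Fin.init X) with hx'def
              set z := X (Fin.last m)
              have hx' : x' ∈ SpanDec (K := K) (g := g) m :=
                Submodule.subset_span ⟨Fin.init X, rfl⟩
              have hbx' : bb r x' ∈ SpanDec (K := K) (g := g) (m + 1) :=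
                br_mem_SpanDec bb hbr hra hx'
              have hbz : bb r (ιK z) ∈ SpanDec (K := K) (g := g) 2 :=
                br_mem_SpanDec bb hbr hra (ι_mem_SpanDec z)
              have e1 := leib_span bb hbr hra hx' z
              have e2 := leib_span bb hbr hra hbx' z
              have e3 := leib_span2 bb hbr hra hx' hbz
              rw [hXd, e1, map_add, map_smul, e2, e3, ihm x' hx', hι z]
              simp only [zero_mul, mul_zero, smul_zero, add_zero, zero_add, smul_add,
                smul_smul, pow_succ]
              module
          | zero => simp
          | add x1 x2 h1 h2 ih1 ih2 => simp only [map_add]; rw [ih1, ih2, add_zero]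
          | smul c x1 h1 ih => simp only [map_smul]; rw [ih, smul_zero]
    intro x
    have hx := mem_span_dec (K := K) x
    induction hx using Submodule.span_induction with
    | mem w hw =>
        obtain ⟨L, rfl⟩ := hw
        exact key L.length _ (lprod_mem L)
    | zero => simp
    | add x1 x2 h1 h2 ih1 ih2 => simp only [map_add]; rw [ih1, ih2, add_zero]
    | smul c x1 h1 ih => simp only [map_smul]; rw [ih, smul_zero]


/-!
STATEMENT 4: For r ∈ ⋀²g, the degree-1 derivation d_r = ⟦r,·⟧ of ⋀g squares to zero
if and only if ⟦r,r⟧ ∈ (⋀³g)^g, i.e. iff ⟦r,r⟧ is invariant under the adjoint action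
of g.  The adjoint action of y ∈ g on ⋀g is ad(y) = ⟦ι y, ·⟧ (since ⟦X̲,Y⟧ = −ad(Y)X̲
for Y ∈ g), so invariance of ⟦r,r⟧ reads ⟦ι y, ⟦r,r⟧⟧ = 0 for all y ∈ g.
-/
theorem stmt4
    (br : ExteriorAlgebra K g →ₗ[K] ExteriorAlgebra K g →ₗ[K] ExteriorAlgebra K g)
    (hbr : IsSchoutenBracket br)
    (r : ExteriorAlgebra K g) (hr : r ∈ ⋀[K]^2 g) :
    (∀ x : ExteriorAlgebra K g, br r (br r x) = 0) ↔
      (∀ y : g, br (ExteriorAlgebra.ι K y) (br r r) = 0) := by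
  exact stmt4aux br hbr r hr

end
end

section
/- Suppose r_g ∈ ⋀²g is a solution of the MCYBE and r_D ∈ ⋀²g_D is such that r_g − r_D is g_D-invariant. Then r_D is a solution of the MCYBE for g_D. -/
/-!
STATEMENT 2: The Schouten bracket endows ⋀g with the structure of a ℤ-graded Lie
algebra when ⋀^k g has degree k−1: graded antisymmetry and graded Jacobi hold for
X ∈ ⋀^k g, Y ∈ ⋀^l g, Z ∈ ⋀g.

The Schouten bracket is encoded as a bilinear map `br` on the exterior algebra
satisfying the defining formula on decomposables:
⟦X₁∧…∧X_k, Y₁∧…∧Y_l⟧ = Σ_{i,j} (−1)^{i+j} [Xᵢ,Yⱼ] ∧ (X omit i) ∧ (Y omit j).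
-/

open ExteriorAlgebra

noncomputable section

variable {K : Type*} [Field K] [CharZero K]
variable {g : Type*} [LieRing g] [LieAlgebra K g]

/-- ⋀²g_D inside ⋀g: the span of products ι a * ι b with a, b ∈ g_D. -/
def wedge2Sub (D : LieSubalgebra K g) : Submodule K (ExteriorAlgebra K g) :=
  Submodule.span K
    {z | ∃ a ∈ D, ∃ b ∈ D, z = ExteriorAlgebra.ι K a * ExteriorAlgebra.ι K b}

section Aux

set_option linter.unusedSectionVars false

/-- Anticommutation of degree-one elements. -/
lemma aux_sw2 (x y : g) : ι K x * ι K y = -(ι K y * ι K x) :=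
  eq_neg_of_add_eq_zero_left (ι_add_mul_swap x y)

lemma aux_sw3a (x y z : g) : ι K x * ι K y * ι K z = -(ι K y * ι K x * ι K z) := by
  rw [aux_sw2 x y]; noncomm_ring

lemma aux_sw3c (x y z : g) : ι K x * ι K y * ι K z = -(ι K x * ι K z * ι K y) := by
  rw [mul_assoc, aux_sw2 y z]; noncomm_ring

lemma aux_rot (x y z : g) : ι K x * ι K y * ι K z = ι K z * ι K x * ι K y := by
  rw [aux_sw3c, aux_sw3a]; noncomm_ring

lemma aux_swsw (x y u v : g) :
    ι K ⁅x, y⁆ * ι K u * ι K v = ι K ⁅y, x⁆ * ι K v * ι K u := by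
  rw [← lie_skew x y, map_neg, neg_mul, neg_mul, aux_sw3c]; noncomm_ring

variable (br : ExteriorAlgebra K g →ₗ[K] ExteriorAlgebra K g →ₗ[K] ExteriorAlgebra K g)

lemma aux_hw22 (hbr : IsSchoutenBracket br) (a b c e : g) :
    br (ι K a * ι K b) (ι K c * ι K e) =
      ι K ⁅a,c⁆ * ι K b * ι K e - ι K ⁅a,e⁆ * ι K b * ι K c
      - ι K ⁅b,c⁆ * ι K a * ι K e + ι K ⁅b,e⁆ * ι K a * ι K c := by
  have h := hbr 2 2 ![a,b] ![c,e]
  simp [wdg, wdgErase, Fin.sum_univ_two, List.ofFn_succ] at h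
  rw [h]; abel

lemma aux_hw12 (hbr : IsSchoutenBracket br) (d c e : g) :
    br (ι K d) (ι K c * ι K e) = ι K ⁅d,c⁆ * ι K e - ι K ⁅d,e⁆ * ι K c := by
  have h := hbr 1 2 ![d] ![c,e]
  simp [wdg, wdgErase, Fin.sum_univ_two, Fin.sum_univ_one, List.ofFn_succ] at h
  rw [h]; abel

lemma aux_hw13 (hbr : IsSchoutenBracket br) (d u v w : g) :
    br (ι K d) (ι K u * ι K v * ι K w) =
      ι K ⁅d,u⁆ * ι K v * ι K w - ι K ⁅d,v⁆ * ι K u * ι K w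
      + ι K ⁅d,w⁆ * ι K u * ι K v := by
  have h := hbr 1 3 ![d] ![u,v,w]
  simp [wdg, wdgErase, Fin.sum_univ_three, Fin.sum_univ_one, List.ofFn_succ, mul_assoc] at h
  rw [show ((ι K) u * ((ι K) v * (ι K) w) : ExteriorAlgebra K g)
      = ι K u * ι K v * ι K w by noncomm_ring] at h
  rw [h]; noncomm_ring

/-- Symmetry on decomposable 2-vectors. -/
lemma aux_sym_dec (hbr : IsSchoutenBracket br) (a b c e : g) :
    br (ι K a * ι K b) (ι K c * ι K e) = br (ι K c * ι K e) (ι K a * ι K b) := by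
  rw [aux_hw22 br hbr a b c e, aux_hw22 br hbr c e a b,
      aux_swsw c a e b, aux_swsw c b e a, aux_swsw e a c b, aux_swsw e b c a]
  abel

/-- Leibniz / Jacobi in degrees (1,2,2), decomposable case. -/
lemma aux_leib_dec (hbr : IsSchoutenBracket br) (d a b c e : g) :
    br (ι K d) (br (ι K a * ι K b) (ι K c * ι K e)) =
      br (br (ι K d) (ι K a * ι K b)) (ι K c * ι K e)
      + br (ι K a * ι K b) (br (ι K d) (ι K c * ι K e)) := by
  rw [aux_hw22 br hbr a b c e, aux_hw12 br hbr d a b, aux_hw12 br hbr d c e]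
  simp only [map_sub, map_add, LinearMap.sub_apply, LinearMap.add_apply,
    aux_hw13 br hbr, aux_hw22 br hbr]
  rw [leibniz_lie d a c, leibniz_lie d a e, leibniz_lie d b c, leibniz_lie d b e]
  simp only [map_add, add_mul]
  rw [aux_sw3a ⁅b,c⁆ ⁅d,a⁆ e, aux_sw3a ⁅b,e⁆ ⁅d,a⁆ c,
      aux_sw3a ⁅a,c⁆ ⁅d,b⁆ e, aux_sw3a ⁅a,e⁆ ⁅d,b⁆ c,
      aux_rot ⁅a,e⁆ b ⁅d,c⁆, aux_rot ⁅b,e⁆ a ⁅d,c⁆,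
      aux_rot ⁅a,c⁆ b ⁅d,e⁆, aux_rot ⁅b,c⁆ a ⁅d,e⁆]
  abel

/-- Leibniz in degree 2 acting on 2-vectors, decomposable case. -/
lemma aux_leib2_dec (hbr : IsSchoutenBracket br) (a b c e : g) :
    br (ι K a * ι K b) (ι K c * ι K e) =
      ι K a * br (ι K b) (ι K c * ι K e) - ι K b * br (ι K a) (ι K c * ι K e) := by
  rw [aux_hw22 br hbr a b c e, aux_hw12 br hbr b c e, aux_hw12 br hbr a c e]
  simp only [mul_sub, ← mul_assoc]
  rw [aux_sw3a a ⁅b,c⁆ e, aux_sw3a a ⁅b,e⁆ c, aux_sw3a b ⁅a,c⁆ e, aux_sw3a b ⁅a,e⁆ c]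
  abel

/-- The span of all decomposable 2-vectors. -/
def sp2 : Submodule K (ExteriorAlgebra K g) :=
  Submodule.span K {z | ∃ a b : g, z = ι K a * ι K b}

lemma aux_mem_sp2 {x : ExteriorAlgebra K g} (h : x ∈ ⋀[K]^2 g) : x ∈ (sp2 : Submodule K (ExteriorAlgebra K g)) := by
  rw [← ιMulti_span_fixedDegree] at h
  refine Submodule.span_mono ?_ h
  rintro _ ⟨v, rfl⟩
  exact ⟨v 0, v 1, by simp [ιMulti_apply, List.ofFn_succ, Matrix.vecTail, Function.comp]⟩

lemma aux_wedge2Sub_le_sp2 (D : LieSubalgebra K g) :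
    wedge2Sub D ≤ (sp2 : Submodule K (ExteriorAlgebra K g)) := by
  refine Submodule.span_mono ?_
  rintro _ ⟨a, _, b, _, rfl⟩
  exact ⟨a, b, rfl⟩

/-- Symmetry on sp2. -/
lemma aux_sym (hbr : IsSchoutenBracket br) {u v : ExteriorAlgebra K g}
    (hu : u ∈ (sp2 : Submodule K (ExteriorAlgebra K g)))
    (hv : v ∈ (sp2 : Submodule K (ExteriorAlgebra K g))) :
    br u v = br v u := by
  induction hu using Submodule.span_induction with
  | mem x hx =>
    obtain ⟨a, b, rfl⟩ := hx
    induction hv using Submodule.span_induction with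
    | mem y hy => obtain ⟨c, e, rfl⟩ := hy; exact aux_sym_dec br hbr a b c e
    | zero => simp
    | add y z _ _ hy hz => simp [map_add, hy, hz]
    | smul c y _ hy => simp [map_smul, hy]
  | zero => simp
  | add x y _ _ hx hy => simp [map_add, LinearMap.add_apply, hx, hy]
  | smul c x _ hx => simp [map_smul, LinearMap.smul_apply, hx]

/-- Leibniz in degrees (1,2,2) on sp2. -/
lemma aux_leib (hbr : IsSchoutenBracket br) (d : g) {u v : ExteriorAlgebra K g}
    (hu : u ∈ (sp2 : Submodule K (ExteriorAlgebra K g)))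
    (hv : v ∈ (sp2 : Submodule K (ExteriorAlgebra K g))) :
    br (ι K d) (br u v) = br (br (ι K d) u) v + br u (br (ι K d) v) := by
  induction hu using Submodule.span_induction with
  | mem x hx =>
    obtain ⟨a, b, rfl⟩ := hx
    induction hv using Submodule.span_induction with
    | mem y hy => obtain ⟨c, e, rfl⟩ := hy; exact aux_leib_dec br hbr d a b c e
    | zero => simp
    | add y z _ _ hy hz =>
      simp only [map_add, LinearMap.add_apply] at hy hz ⊢
      rw [hy, hz]; abel
    | smul c y _ hy =>
      simp only [map_smul, LinearMap.smul_apply] at hy ⊢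
      rw [hy]; rw [smul_add]
  | zero => simp
  | add x y _ _ hx hy =>
    simp only [map_add, LinearMap.add_apply] at hx hy ⊢
    rw [hx, hy]; abel
  | smul c x _ hx =>
    simp only [map_smul, LinearMap.smul_apply] at hx ⊢
    rw [hx]; rw [smul_add]

/-- Leibniz in degree 2 on sp2. -/
lemma aux_leib2 (hbr : IsSchoutenBracket br) (a b : g) {v : ExteriorAlgebra K g}
    (hv : v ∈ (sp2 : Submodule K (ExteriorAlgebra K g))) :
    br (ι K a * ι K b) v = ι K a * br (ι K b) v - ι K b * br (ι K a) v := by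
  induction hv using Submodule.span_induction with
  | mem y hy => obtain ⟨c, e, rfl⟩ := hy; exact aux_leib2_dec br hbr a b c e
  | zero => simp
  | add y z _ _ hy hz =>
    simp only [map_add] at hy hz ⊢
    rw [hy, hz]; noncomm_ring
  | smul c y _ hy =>
    simp only [map_smul] at hy ⊢
    rw [hy]; rw [smul_sub, mul_smul_comm, mul_smul_comm]

/-- Closure: ad of an element of D preserves wedge2Sub D. -/
lemma aux_closure (hbr : IsSchoutenBracket br) (D : LieSubalgebra K g) {d : g} (hd : d ∈ D)
    {u : ExteriorAlgebra K g} (hu : u ∈ wedge2Sub D) :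
    br (ι K d) u ∈ wedge2Sub D := by
  induction hu using Submodule.span_induction with
  | mem x hx =>
    obtain ⟨a, ha, b, hb, rfl⟩ := hx
    rw [aux_hw12 br hbr d a b]
    refine sub_mem ?_ ?_ <;>
      exact Submodule.subset_span ⟨_, D.lie_mem hd ‹_›, _, ‹_›, rfl⟩
  | zero => simp
  | add x y _ _ hx hy => rw [map_add]; exact add_mem hx hy
  | smul c x _ hx => rw [map_smul]; exact Submodule.smul_mem _ _ hx

end Aux

/-!
STATEMENT 7: If r_g ∈ ⋀²g solves the MCYBE (⟦r_g,r_g⟧ is g-invariant) and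
r_D ∈ ⋀²g_D is such that r_g − r_D is g_D-invariant, then r_D solves the MCYBE
for g_D, i.e. ⟦r_D,r_D⟧ is g_D-invariant.
-/
theorem stmt7
    (br : ExteriorAlgebra K g →ₗ[K] ExteriorAlgebra K g →ₗ[K] ExteriorAlgebra K g)
    (hbr : IsSchoutenBracket br)
    (D : LieSubalgebra K g)
    (rg rD : ExteriorAlgebra K g)
    (hrg : rg ∈ ⋀[K]^2 g) (hrD2 : rD ∈ ⋀[K]^2 g) (hrDD : rD ∈ wedge2Sub D)
    (hmg : ∀ y : g, br (ExteriorAlgebra.ι K y) (br rg rg) = 0)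
    (hinv : ∀ d ∈ D, br (ExteriorAlgebra.ι K d) (rg - rD) = 0) :
    ∀ d ∈ D, br (ExteriorAlgebra.ι K d) (br rD rD) = 0 := by
  intro d hd
  have hrg2 : rg ∈ (sp2 : Submodule K (ExteriorAlgebra K g)) := aux_mem_sp2 hrg
  have hrD2' : rD ∈ (sp2 : Submodule K (ExteriorAlgebra K g)) := aux_mem_sp2 hrD2
  have hsdiff : rg - rD ∈ (sp2 : Submodule K (ExteriorAlgebra K g)) :=
    sub_mem hrg2 hrD2'
  set p := br (ι K d) rD with hp_def
  have hpD : p ∈ wedge2Sub D := aux_closure br hbr D hd hrDD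
  have hp2 : p ∈ (sp2 : Submodule K (ExteriorAlgebra K g)) := aux_wedge2Sub_le_sp2 D hpD
  -- br (ι d) rg = p
  have hdg : br (ι K d) rg = p := by
    have h := hinv d hd
    rw [map_sub] at h
    have : br (ι K d) rg - br (ι K d) rD = 0 := h
    rw [sub_eq_zero] at this
    rw [this]
  -- br p rg = 0
  have hprg : br p rg = 0 := by
    have j := aux_leib br hbr d hrg2 hrg2
    rw [hmg d, hdg, aux_sym br hbr hrg2 hp2] at j
    have h2 : (2 : K) • br p rg = 0 := by rw [two_smul]; exact j.symm
    exact (smul_eq_zero.mp h2).resolve_left (by norm_num)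
  -- br p (rg - rD) = 0, hence br p rD = 0
  have key : ∀ q ∈ wedge2Sub D, br q (rg - rD) = 0 := by
    intro q hq
    induction hq using Submodule.span_induction with
    | mem x hx =>
      obtain ⟨a, ha, b, hb, rfl⟩ := hx
      rw [aux_leib2 br hbr a b hsdiff, hinv a ha, hinv b hb, mul_zero, mul_zero, sub_zero]
    | zero => simp
    | add x y _ _ hx hy => rw [map_add, LinearMap.add_apply, hx, hy, add_zero]
    | smul c x _ hx => rw [map_smul, LinearMap.smul_apply, hx, smul_zero]
  have hps : br p (rg - rD) = 0 := key p hpD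
  have hprD : br p rD = 0 := by
    rw [map_sub, hprg, zero_sub, neg_eq_zero] at hps
    exact hps
  -- conclude
  have j := aux_leib br hbr d hrD2' hrD2'
  rw [j, ← hp_def, hprD, aux_sym br hbr hrD2' hp2, hprD, add_zero]


end
end

section
/- For any f, χ ∈ ⋀²g, viewed inside U(g)^⊗3 via antisymmetrisation, one has Alt₃( f¹²(χ¹³+χ²³) + χ¹²(f¹³+f²³) − f²³(χ¹²+χ¹³) − χ²³(f¹²+f¹³) ) = ⟦f,χ⟧, where the products are taken in U(g)^⊗3 and ⟦·,·⟧ is the Schouten bracket. -/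
/-!
STATEMENT 8: For f, χ ∈ ⋀²g viewed inside U(g)^⊗3 via antisymmetrisation,
Alt₃( f¹²(χ¹³+χ²³) + χ¹²(f¹³+f²³) − f²³(χ¹²+χ¹³) − χ²³(f¹²+f¹³) ) = ⟦f,χ⟧,
with products in U(g)^⊗3 and ⟦·,·⟧ the Schouten bracket.  We state it for
decomposables f = f₁∧f₂, χ = χ₁∧χ₂ (to which the general case reduces by
bilinearity); then ⟦f,χ⟧ = Σ_{i,j}(−1)^{i+j}[fᵢ,χⱼ]∧f_{3−i}∧χ_{3−j}.
-/

open TensorProduct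

noncomputable section

variable (K : Type*) [Field K] [CharZero K]
variable (g : Type*) [LieRing g] [LieAlgebra K g]

abbrev UEnv := UniversalEnvelopingAlgebra K g

attribute [local instance 100] LieRing.ofAssociativeRing

def iU : g →ₗ[K] UEnv K g := (UniversalEnvelopingAlgebra.ι K).toLinearMap

abbrev T3 := (UEnv K g ⊗[K] UEnv K g) ⊗[K] UEnv K g

def pl12 : g ⊗[K] g →ₗ[K] T3 K g :=
  ((TensorProduct.mk K (UEnv K g ⊗[K] UEnv K g) (UEnv K g)).flip 1).comp
    (TensorProduct.map (iU K g) (iU K g))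

def pl13 : g ⊗[K] g →ₗ[K] T3 K g :=
  TensorProduct.map (((TensorProduct.mk K (UEnv K g) (UEnv K g)).flip 1).comp (iU K g)) (iU K g)

def pl23 : g ⊗[K] g →ₗ[K] T3 K g :=
  TensorProduct.map ((TensorProduct.mk K (UEnv K g) (UEnv K g) 1).comp (iU K g)) (iU K g)

def s1 : T3 K g →ₗ[K] T3 K g :=
  TensorProduct.map (TensorProduct.comm K (UEnv K g) (UEnv K g)).toLinearMap LinearMap.id

def s2 : T3 K g →ₗ[K] T3 K g :=
  (TensorProduct.assoc K (UEnv K g) (UEnv K g) (UEnv K g)).symm.toLinearMap ∘ₗ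
    (TensorProduct.map LinearMap.id (TensorProduct.comm K (UEnv K g) (UEnv K g)).toLinearMap) ∘ₗ
      (TensorProduct.assoc K (UEnv K g) (UEnv K g) (UEnv K g)).toLinearMap

/-- The antisymmetrisation projector Alt₃. -/
def alt3 : T3 K g →ₗ[K] T3 K g :=
  (6 : K)⁻¹ • (LinearMap.id - s1 K g - s2 K g + s1 K g ∘ₗ s2 K g + s2 K g ∘ₗ s1 K g
    - s1 K g ∘ₗ s2 K g ∘ₗ s1 K g)

/-- a ∧ b as an antisymmetric tensor in g ⊗ g. -/
def wdg2 (a b : g) : g ⊗[K] g := (2 : K)⁻¹ • (a ⊗ₜ[K] b - b ⊗ₜ[K] a)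

def t3 (a b c : g) : T3 K g := (iU K g a ⊗ₜ[K] iU K g b) ⊗ₜ[K] iU K g c

/-- a ∧ b ∧ c as an antisymmetric tensor in U(g)^⊗3. -/
def wdg3 (a b c : g) : T3 K g :=
  (6 : K)⁻¹ • (t3 K g a b c - t3 K g b a c - t3 K g a c b - t3 K g c b a
    + t3 K g b c a + t3 K g c a b)

/-!
The left side is bilinear in `f` and `χ`, so it is computed on pure tensors `f = a ⊗ b`,
`χ = c ⊗ d` first. Each of the eight products is then a pure tensor with one product of two
generators in a single leg, and modulo the kernel of `Alt₃` they pair up into commutators: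
`f¹²χ¹³ + χ¹²f¹³ ≡ [a,c] ⊗ b ⊗ d`, `f¹²χ²³ − χ²³f¹² = a ⊗ [b,c] ⊗ d`,
`χ¹²f²³ − f²³χ¹² = c ⊗ [d,a] ⊗ b` and `−f²³χ¹³ − χ²³f¹³ ≡ −c ⊗ a ⊗ [b,d]`. Reordering the legs
gives the four Schouten terms of `a ⊗ b` and `c ⊗ d`. They are antisymmetric in `(a, b)` and in
`(c, d)`, so each of the four terms of `(f₁ ∧ f₂, χ₁ ∧ χ₂)` contributes the same, with weight `1/4`.
-/

namespace Schouten

variable {K g}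

omit [CharZero K]

def legProduct : g ⊗[K] g →ₗ[K] g ⊗[K] g →ₗ[K] T3 K g :=
  LinearMap.mk₂ K
    (fun f χ => pl12 K g f * (pl13 K g χ + pl23 K g χ) + pl12 K g χ * (pl13 K g f + pl23 K g f)
      - pl23 K g f * (pl12 K g χ + pl13 K g χ) - pl23 K g χ * (pl12 K g f + pl13 K g f))
    (fun _ _ _ => by simp only [map_add, add_mul, mul_add]; abel)
    (fun _ _ _ => by
      simp only [map_smul, mul_add, smul_add, smul_mul_assoc, mul_smul_comm, smul_sub])
    (fun _ _ _ => by simp only [map_add, add_mul, mul_add]; abel)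
    (fun _ _ _ => by
      simp only [map_smul, mul_add, smul_add, smul_mul_assoc, mul_smul_comm, smul_sub])

theorem legProduct_apply (f χ : g ⊗[K] g) :
    legProduct f χ = pl12 K g f * (pl13 K g χ + pl23 K g χ) + pl12 K g χ * (pl13 K g f + pl23 K g f)
      - pl23 K g f * (pl12 K g χ + pl13 K g χ) - pl23 K g χ * (pl12 K g f + pl13 K g f) :=
  rfl

theorem s1_tmul (x y z : UEnv K g) : s1 K g ((x ⊗ₜ y) ⊗ₜ z) = (y ⊗ₜ x) ⊗ₜ z := by
  simp [s1]

theorem s2_tmul (x y z : UEnv K g) : s2 K g ((x ⊗ₜ y) ⊗ₜ z) = (x ⊗ₜ z) ⊗ₜ y := by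
  simp [s2]

theorem alt3_tmul (x y z : UEnv K g) : alt3 K g ((x ⊗ₜ y) ⊗ₜ z) =
    (6 : K)⁻¹ • ((x ⊗ₜ y) ⊗ₜ z - (y ⊗ₜ x) ⊗ₜ z - (x ⊗ₜ z) ⊗ₜ y
      - (z ⊗ₜ y) ⊗ₜ x + (y ⊗ₜ z) ⊗ₜ x + (z ⊗ₜ x) ⊗ₜ y) := by
  simp only [alt3, LinearMap.smul_apply, LinearMap.sub_apply, LinearMap.add_apply,
    LinearMap.id_apply, LinearMap.comp_apply, s1_tmul, s2_tmul]
  module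

theorem iU_lie (x y : g) : iU K g ⁅x, y⁆ = iU K g x * iU K g y - iU K g y * iU K g x :=
  (LieHom.map_lie (UniversalEnvelopingAlgebra.ι K) x y).trans (Ring.lie_def _ _)

theorem pl12_tmul (a b : g) : pl12 K g (a ⊗ₜ b) = (iU K g a ⊗ₜ iU K g b) ⊗ₜ 1 := by
  simp [pl12]

theorem pl13_tmul (a b : g) : pl13 K g (a ⊗ₜ b) = (iU K g a ⊗ₜ 1) ⊗ₜ iU K g b := by
  simp [pl13]

theorem pl23_tmul (a b : g) : pl23 K g (a ⊗ₜ b) = ((1 : UEnv K g) ⊗ₜ iU K g a) ⊗ₜ iU K g b := by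
  simp [pl23]

theorem alt3_legProduct_tmul_tmul (a b c d : g) :
    alt3 K g (legProduct (a ⊗ₜ b) (c ⊗ₜ d)) =
      wdg3 K g ⁅a, c⁆ b d - wdg3 K g ⁅a, d⁆ b c - wdg3 K g ⁅b, c⁆ a d + wdg3 K g ⁅b, d⁆ a c := by
  simp only [legProduct_apply, pl12_tmul, pl13_tmul, pl23_tmul,
    Algebra.TensorProduct.tmul_mul_tmul, one_mul, mul_one, wdg3, t3, iU_lie,
    sub_tmul, tmul_sub, mul_add, map_add, map_sub, alt3_tmul]
  module

end Schouten

open Schouten in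
theorem stmt8 (f₁ f₂ χ₁ χ₂ : g) :
    alt3 K g
      (pl12 K g (wdg2 K g f₁ f₂) * (pl13 K g (wdg2 K g χ₁ χ₂) + pl23 K g (wdg2 K g χ₁ χ₂))
        + pl12 K g (wdg2 K g χ₁ χ₂) * (pl13 K g (wdg2 K g f₁ f₂) + pl23 K g (wdg2 K g f₁ f₂))
        - pl23 K g (wdg2 K g f₁ f₂) * (pl12 K g (wdg2 K g χ₁ χ₂) + pl13 K g (wdg2 K g χ₁ χ₂))
        - pl23 K g (wdg2 K g χ₁ χ₂) * (pl12 K g (wdg2 K g f₁ f₂) + pl13 K g (wdg2 K g f₁ f₂)))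
      =
      wdg3 K g ⁅f₁, χ₁⁆ f₂ χ₂ - wdg3 K g ⁅f₁, χ₂⁆ f₂ χ₁
        - wdg3 K g ⁅f₂, χ₁⁆ f₁ χ₂ + wdg3 K g ⁅f₂, χ₂⁆ f₁ χ₁ := by
  rw [← legProduct_apply]
  simp only [wdg2, map_smul, map_sub, LinearMap.smul_apply, LinearMap.sub_apply,
    alt3_legProduct_tmul_tmul]
  module

end
end
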